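/- Define, for a sufficiently smooth function û on K̂ = [−1,1]³ and v̂ in the reference shape space P̂ = P₂(K̂) + span{ξ₁³, ξ₂³, ξ₃³, ξ₁ξ₂ξ₃}, the functional B₄(û, v̂) = (1/3) Σ_{i≠j, i,j∈{1,2,3}} ∫_{K̂} (∂³û/∂ξᵢ∂ξⱼ²)(∂³v̂/∂ξᵢ³) dξ − (1/12) Σ_{i=1}^{3} ∫_{K̂} ( ∫_{F̂ᵢ} Σ_{j≠i} (∂³û/∂ξᵢ∂ξⱼ²) dσ ) (∂³v̂/∂ξᵢ³) dξ, where F̂ᵢ is the face {ξᵢ = 1} of K̂. Then B₄(û, v̂) = 0 for every polynomial û of total degree ≤ 3 and every v̂ ∈ P̂. -/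
import Mathlib


open MeasureTheory

lemma dcub (a b c d s : ℝ) :
    deriv (fun t : ℝ => a + b*t + c*t^2 + d*t^3) s = b + 2*c*s + 3*d*s^2 := by
  have h : HasDerivAt (fun t : ℝ => a + b*t + c*t^2 + d*t^3)
      (0 + b*1 + c*((2:ℕ)*s^(2-1)) + d*((3:ℕ)*s^(3-1))) s :=
    (((hasDerivAt_const s a).add ((hasDerivAt_id s).const_mul b)).add
      ((hasDerivAt_pow 2 s).const_mul c)).add ((hasDerivAt_pow 3 s).const_mul d)
  rw [h.deriv]; push_cast; try ring

lemma dquad (a b c s : ℝ) :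
    deriv (fun t : ℝ => a + b*t + c*t^2) s = b + 2*c*s := by
  have h : HasDerivAt (fun t : ℝ => a + b*t + c*t^2)
      (0 + b*1 + c*((2:ℕ)*s^(2-1))) s :=
    ((hasDerivAt_const s a).add ((hasDerivAt_id s).const_mul b)).add
      ((hasDerivAt_pow 2 s).const_mul c)
  rw [h.deriv]; push_cast; try ring

lemma dlin (a b s : ℝ) : deriv (fun t : ℝ => a + b*t) s = b := by
  have h : HasDerivAt (fun t : ℝ => a + b*t) (0 + b*1) s :=
    (hasDerivAt_const s a).add ((hasDerivAt_id s).const_mul b)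
  rw [h.deriv]; try ring

/-- Partial derivative in the first variable of a curried function on `ℝ³`. -/
noncomputable def qd1 (f : ℝ → ℝ → ℝ → ℝ) : ℝ → ℝ → ℝ → ℝ :=
  fun x y z => deriv (fun t => f t y z) x

/-- Partial derivative in the second variable of a curried function on `ℝ³`. -/
noncomputable def qd2 (f : ℝ → ℝ → ℝ → ℝ) : ℝ → ℝ → ℝ → ℝ :=
  fun x y z => deriv (fun t => f x t z) y

/-- Partial derivative in the third variable of a curried function on `ℝ³`. -/
noncomputable def qd3 (f : ℝ → ℝ → ℝ → ℝ) : ℝ → ℝ → ℝ → ℝ :=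
  fun x y z => deriv (fun t => f x y t) z

/-- Membership in the shape space `P(K) = P₂(K) + span{x₁³, x₂³, x₃³, x₁x₂x₃}` of the
three-dimensional cubic Morley element. -/
def MorleyShape3 (w : ℝ → ℝ → ℝ → ℝ) : Prop :=
  ∃ c0 c1 c2 c3 c4 c5 c6 c7 c8 c9 c10 c11 c12 c13 : ℝ, ∀ x y z : ℝ,
    w x y z = c0 + c1 * x + c2 * y + c3 * z + c4 * x ^ 2 + c5 * y ^ 2 + c6 * z ^ 2
      + c7 * (x * y) + c8 * (x * z) + c9 * (y * z)
      + c10 * x ^ 3 + c11 * y ^ 3 + c12 * z ^ 3 + c13 * (x * y * z)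

/-- The functional `B₄` on the reference cube `[-1,1]³`. -/
noncomputable def B4 (u v : ℝ → ℝ → ℝ → ℝ) : ℝ :=
  (1 / 3) * (∫ x in (-1:ℝ)..1, ∫ y in (-1:ℝ)..1, ∫ z in (-1:ℝ)..1,
      (qd1 (qd2 (qd2 u)) x y z + qd1 (qd3 (qd3 u)) x y z) * qd1 (qd1 (qd1 v)) x y z
        + (qd1 (qd1 (qd2 u)) x y z + qd2 (qd3 (qd3 u)) x y z) * qd2 (qd2 (qd2 v)) x y z
        + (qd1 (qd1 (qd3 u)) x y z + qd2 (qd2 (qd3 u)) x y z) * qd3 (qd3 (qd3 v)) x y z)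
    - (1 / 12) * (∫ x in (-1:ℝ)..1, ∫ y in (-1:ℝ)..1, ∫ z in (-1:ℝ)..1,
      (∫ s in (-1:ℝ)..1, ∫ t in (-1:ℝ)..1,
              qd1 (qd2 (qd2 u)) 1 s t + qd1 (qd3 (qd3 u)) 1 s t)
          * qd1 (qd1 (qd1 v)) x y z
        + (∫ s in (-1:ℝ)..1, ∫ t in (-1:ℝ)..1,
              qd1 (qd1 (qd2 u)) s 1 t + qd2 (qd3 (qd3 u)) s 1 t)
          * qd2 (qd2 (qd2 v)) x y z
        + (∫ s in (-1:ℝ)..1, ∫ t in (-1:ℝ)..1,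
              qd1 (qd1 (qd3 u)) s t 1 + qd2 (qd2 (qd3 u)) s t 1)
          * qd3 (qd3 (qd3 v)) x y z)

/-- Membership in the space of polynomials of total degree at most 3 in three variables. -/
def PolyDeg3Three (u : ℝ → ℝ → ℝ → ℝ) : Prop :=
  ∃ c0 c1 c2 c3 c4 c5 c6 c7 c8 c9 c10 c11 c12 c13 c14 c15 c16 c17 c18 c19 : ℝ,
    ∀ x y z : ℝ,
      u x y z = c0 + c1 * x + c2 * y + c3 * z
        + c4 * x ^ 2 + c5 * y ^ 2 + c6 * z ^ 2
        + c7 * (x * y) + c8 * (x * z) + c9 * (y * z)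
        + c10 * x ^ 3 + c11 * y ^ 3 + c12 * z ^ 3
        + c13 * (x ^ 2 * y) + c14 * (x ^ 2 * z) + c15 * (x * y ^ 2)
        + c16 * (y ^ 2 * z) + c17 * (x * z ^ 2) + c18 * (y * z ^ 2)
        + c19 * (x * y * z)

/-- The functional `B₄` vanishes on cubic polynomials tested against the reference
cubic Morley shape space. -/
theorem stmt_17 (u v : ℝ → ℝ → ℝ → ℝ) (hu : PolyDeg3Three u) (hv : MorleyShape3 v) :
    B4 u v = 0 := by
  obtain ⟨a0,a1,a2,a3,a4,a5,a6,a7,a8,a9,a10,a11,a12,a13,a14,a15,a16,a17,a18,a19,hu⟩ := hu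
  obtain ⟨b0,b1,b2,b3,b4,b5,b6,b7,b8,b9,b10,b11,b12,b13,hv⟩ := hv
  -- first derivatives of u
  have hu2 : ∀ x y z : ℝ, qd2 u x y z =
      a2 + a7*x + a9*z + a13*x^2 + a18*z^2 + a19*(x*z)
        + 2*(a5 + a15*x + a16*z)*y + 3*a11*y^2 := by
    intro x y z
    have e : (fun t : ℝ => u x t z) = fun t : ℝ =>
        (a0 + a1*x + a3*z + a4*x^2 + a6*z^2 + a8*(x*z) + a10*x^3 + a12*z^3
          + a14*(x^2*z) + a17*(x*z^2))
        + (a2 + a7*x + a9*z + a13*x^2 + a18*z^2 + a19*(x*z))*t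
        + (a5 + a15*x + a16*z)*t^2 + a11*t^3 := funext fun t => by rw [hu]; try ring
    rw [qd2, e, dcub]; try ring
  have hu3 : ∀ x y z : ℝ, qd3 u x y z =
      a3 + a8*x + a9*y + a14*x^2 + a16*y^2 + a19*(x*y)
        + 2*(a6 + a17*x + a18*y)*z + 3*a12*z^2 := by
    intro x y z
    have e : (fun t : ℝ => u x y t) = fun t : ℝ =>
        (a0 + a1*x + a2*y + a4*x^2 + a5*y^2 + a7*(x*y) + a10*x^3 + a11*y^3
          + a13*(x^2*y) + a15*(x*y^2))
        + (a3 + a8*x + a9*y + a14*x^2 + a16*y^2 + a19*(x*y))*t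
        + (a6 + a17*x + a18*y)*t^2 + a12*t^3 := funext fun t => by rw [hu]; try ring
    rw [qd3, e, dcub]; try ring
  -- second derivatives of u
  have hu22 : ∀ x y z : ℝ, qd2 (qd2 u) x y z =
      2*(a5 + a15*x + a16*z) + 6*a11*y := by
    intro x y z
    have e : (fun t : ℝ => qd2 u x t z) = fun t : ℝ =>
        (a2 + a7*x + a9*z + a13*x^2 + a18*z^2 + a19*(x*z))
        + (2*(a5 + a15*x + a16*z))*t + (3*a11)*t^2 :=
      funext fun t => by rw [hu2]; try ring
    rw [qd2, e, dquad]; try ring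
  have hu33 : ∀ x y z : ℝ, qd3 (qd3 u) x y z =
      2*(a6 + a17*x + a18*y) + 6*a12*z := by
    intro x y z
    have e : (fun t : ℝ => qd3 u x y t) = fun t : ℝ =>
        (a3 + a8*x + a9*y + a14*x^2 + a16*y^2 + a19*(x*y))
        + (2*(a6 + a17*x + a18*y))*t + (3*a12)*t^2 :=
      funext fun t => by rw [hu3]; try ring
    rw [qd3, e, dquad]; try ring
  have hu12 : ∀ x y z : ℝ, qd1 (qd2 u) x y z =
      a7 + a19*z + 2*a15*y + 2*a13*x := by
    intro x y z
    have e : (fun t : ℝ => qd2 u t y z) = fun t : ℝ =>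
        (a2 + a9*z + a18*z^2 + 2*(a5 + a16*z)*y + 3*a11*y^2)
        + (a7 + a19*z + 2*a15*y)*t + a13*t^2 :=
      funext fun t => by rw [hu2]; try ring
    rw [qd1, e, dquad]; try ring
  have hu13 : ∀ x y z : ℝ, qd1 (qd3 u) x y z =
      a8 + a19*y + 2*a17*z + 2*a14*x := by
    intro x y z
    have e : (fun t : ℝ => qd3 u t y z) = fun t : ℝ =>
        (a3 + a9*y + a16*y^2 + 2*(a6 + a18*y)*z + 3*a12*z^2)
        + (a8 + a19*y + 2*a17*z)*t + a14*t^2 :=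
      funext fun t => by rw [hu3]; try ring
    rw [qd1, e, dquad]; try ring
  have hu23 : ∀ x y z : ℝ, qd2 (qd3 u) x y z =
      a9 + a19*x + 2*a18*z + 2*a16*y := by
    intro x y z
    have e : (fun t : ℝ => qd3 u x t z) = fun t : ℝ =>
        (a3 + a8*x + a14*x^2 + 2*(a6 + a17*x)*z + 3*a12*z^2)
        + (a9 + a19*x + 2*a18*z)*t + a16*t^2 :=
      funext fun t => by rw [hu3]; try ring
    rw [qd2, e, dquad]; try ring
  -- third derivatives of u
  have h122 : ∀ x y z : ℝ, qd1 (qd2 (qd2 u)) x y z = 2*a15 := by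
    intro x y z
    have e : (fun t : ℝ => qd2 (qd2 u) t y z) = fun t : ℝ =>
        (2*(a5 + a16*z) + 6*a11*y) + (2*a15)*t := funext fun t => by rw [hu22]; try ring
    rw [qd1, e, dlin]
  have h133 : ∀ x y z : ℝ, qd1 (qd3 (qd3 u)) x y z = 2*a17 := by
    intro x y z
    have e : (fun t : ℝ => qd3 (qd3 u) t y z) = fun t : ℝ =>
        (2*(a6 + a18*y) + 6*a12*z) + (2*a17)*t := funext fun t => by rw [hu33]; try ring
    rw [qd1, e, dlin]
  have h112 : ∀ x y z : ℝ, qd1 (qd1 (qd2 u)) x y z = 2*a13 := by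
    intro x y z
    have e : (fun t : ℝ => qd1 (qd2 u) t y z) = fun t : ℝ =>
        (a7 + a19*z + 2*a15*y) + (2*a13)*t := funext fun t => by rw [hu12]; try ring
    rw [qd1, e, dlin]
  have h233 : ∀ x y z : ℝ, qd2 (qd3 (qd3 u)) x y z = 2*a18 := by
    intro x y z
    have e : (fun t : ℝ => qd3 (qd3 u) x t z) = fun t : ℝ =>
        (2*(a6 + a17*x) + 6*a12*z) + (2*a18)*t := funext fun t => by rw [hu33]; try ring
    rw [qd2, e, dlin]
  have h113 : ∀ x y z : ℝ, qd1 (qd1 (qd3 u)) x y z = 2*a14 := by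
    intro x y z
    have e : (fun t : ℝ => qd1 (qd3 u) t y z) = fun t : ℝ =>
        (a8 + a19*y + 2*a17*z) + (2*a14)*t := funext fun t => by rw [hu13]; try ring
    rw [qd1, e, dlin]
  have h223 : ∀ x y z : ℝ, qd2 (qd2 (qd3 u)) x y z = 2*a16 := by
    intro x y z
    have e : (fun t : ℝ => qd2 (qd3 u) x t z) = fun t : ℝ =>
        (a9 + a19*x + 2*a18*z) + (2*a16)*t := funext fun t => by rw [hu23]; try ring
    rw [qd2, e, dlin]
  -- derivatives of v
  have hv1 : ∀ x y z : ℝ, qd1 v x y z =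
      (b1 + b7*y + b8*z + b13*(y*z)) + 2*b4*x + 3*b10*x^2 := by
    intro x y z
    have e : (fun t : ℝ => v t y z) = fun t : ℝ =>
        (b0 + b2*y + b3*z + b5*y^2 + b6*z^2 + b9*(y*z) + b11*y^3 + b12*z^3)
        + (b1 + b7*y + b8*z + b13*(y*z))*t + b4*t^2 + b10*t^3 :=
      funext fun t => by rw [hv]; try ring
    rw [qd1, e, dcub]
  have hv2 : ∀ x y z : ℝ, qd2 v x y z =
      (b2 + b7*x + b9*z + b13*(x*z)) + 2*b5*y + 3*b11*y^2 := by
    intro x y z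
    have e : (fun t : ℝ => v x t z) = fun t : ℝ =>
        (b0 + b1*x + b3*z + b4*x^2 + b6*z^2 + b8*(x*z) + b10*x^3 + b12*z^3)
        + (b2 + b7*x + b9*z + b13*(x*z))*t + b5*t^2 + b11*t^3 :=
      funext fun t => by rw [hv]; try ring
    rw [qd2, e, dcub]
  have hv3 : ∀ x y z : ℝ, qd3 v x y z =
      (b3 + b8*x + b9*y + b13*(x*y)) + 2*b6*z + 3*b12*z^2 := by
    intro x y z
    have e : (fun t : ℝ => v x y t) = fun t : ℝ =>
        (b0 + b1*x + b2*y + b4*x^2 + b5*y^2 + b7*(x*y) + b10*x^3 + b11*y^3)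
        + (b3 + b8*x + b9*y + b13*(x*y))*t + b6*t^2 + b12*t^3 :=
      funext fun t => by rw [hv]; try ring
    rw [qd3, e, dcub]
  have hv11 : ∀ x y z : ℝ, qd1 (qd1 v) x y z = 2*b4 + 6*b10*x := by
    intro x y z
    have e : (fun t : ℝ => qd1 v t y z) = fun t : ℝ =>
        (b1 + b7*y + b8*z + b13*(y*z)) + (2*b4)*t + (3*b10)*t^2 :=
      funext fun t => by rw [hv1]; try ring
    rw [qd1, e, dquad]; try ring
  have hv22 : ∀ x y z : ℝ, qd2 (qd2 v) x y z = 2*b5 + 6*b11*y := by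
    intro x y z
    have e : (fun t : ℝ => qd2 v x t z) = fun t : ℝ =>
        (b2 + b7*x + b9*z + b13*(x*z)) + (2*b5)*t + (3*b11)*t^2 :=
      funext fun t => by rw [hv2]; try ring
    rw [qd2, e, dquad]; try ring
  have hv33 : ∀ x y z : ℝ, qd3 (qd3 v) x y z = 2*b6 + 6*b12*z := by
    intro x y z
    have e : (fun t : ℝ => qd3 v x y t) = fun t : ℝ =>
        (b3 + b8*x + b9*y + b13*(x*y)) + (2*b6)*t + (3*b12)*t^2 :=
      funext fun t => by rw [hv3]; try ring
    rw [qd3, e, dquad]; try ring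
  have hv111 : ∀ x y z : ℝ, qd1 (qd1 (qd1 v)) x y z = 6*b10 := by
    intro x y z
    have e : (fun t : ℝ => qd1 (qd1 v) t y z) = fun t : ℝ => (2*b4) + (6*b10)*t :=
      funext fun t => by rw [hv11]
    rw [qd1, e, dlin]
  have hv222 : ∀ x y z : ℝ, qd2 (qd2 (qd2 v)) x y z = 6*b11 := by
    intro x y z
    have e : (fun t : ℝ => qd2 (qd2 v) x t z) = fun t : ℝ => (2*b5) + (6*b11)*t :=
      funext fun t => by rw [hv22]
    rw [qd2, e, dlin]
  have hv333 : ∀ x y z : ℝ, qd3 (qd3 (qd3 v)) x y z = 6*b12 := by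
    intro x y z
    have e : (fun t : ℝ => qd3 (qd3 v) x y t) = fun t : ℝ => (2*b6) + (6*b12)*t :=
      funext fun t => by rw [hv33]
    rw [qd3, e, dlin]
  unfold B4
  simp only [h122, h133, h112, h233, h113, h223, hv111, hv222, hv333,
    intervalIntegral.integral_const, smul_eq_mul]
  ring
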